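/- arXiv:0907.1752 — 2 statements merged into one kernel-verified Lean document; each statement's English description precedes it below -/
import Mathlib

section
/- Let V₁, V₂ be subspaces of a finite-dimensional complex inner product space E and set W := V₂ ∩ V₁⊥. Then for every z ∈ ℂ the algebraic identity T_{V₂}(z) ∘ T_{V₁}(z) = T_{V₂ ∩ W⊥}(z) ∘ T_{W + V₁}(z) holds, where W + V₁ denotes the subspace sum. -/
/-!
Writing `T_U(z) = 1 + (z - 1) Π_U`, the map `U ↦ T_U(z)` turns orthogonal sums into products:
if `U ⟂ V` then `Π_{U ⊔ V} = Π_U + Π_V` and `Π_U Π_V = 0`, so `T_{U ⊔ V}(z) = T_U(z) T_V(z)`.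
Now `V₂ = (V₂ ⊓ Wᗮ) ⊔ W` with `V₂ ⊓ Wᗮ ⟂ W`, and `W ⟂ V₁`, so both sides of the identity equal
`T_{V₂ ⊓ Wᗮ}(z) T_W(z) T_{V₁}(z)`.
-/

noncomputable def projL {E : Type*} [NormedAddCommGroup E] [InnerProductSpace ℂ E]
    [FiniteDimensional ℂ E] (V : Submodule ℂ E) : E →ₗ[ℂ] E :=
  V.subtype ∘ₗ (V.orthogonalProjectionOnto).toLinearMap

noncomputable def TV {E : Type*} [NormedAddCommGroup E] [InnerProductSpace ℂ E]
    [FiniteDimensional ℂ E] (V : Submodule ℂ E) (z : ℂ) : E →ₗ[ℂ] E :=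
  z • projL V + projL Vᗮ

namespace Submodule

variable {𝕜 E : Type*} [RCLike 𝕜] [NormedAddCommGroup E] [InnerProductSpace 𝕜 E]

theorem IsOrtho.starProjection_sup {U V : Submodule 𝕜 E} [U.HasOrthogonalProjection]
    [V.HasOrthogonalProjection] [(U ⊔ V).HasOrthogonalProjection] (h : U ⟂ V) :
    (U ⊔ V).starProjection = U.starProjection + V.starProjection := by
  ext x
  refine eq_starProjection_of_mem_orthogonal
    (add_mem_sup (U.starProjection_apply_mem x) (V.starProjection_apply_mem x)) ?_
  rw [← inf_orthogonal, add_apply]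
  constructor
  · rw [sub_add_eq_sub_sub]
    exact sub_mem (sub_starProjection_mem_orthogonal x)
      (isOrtho_iff_le.mp h.symm (V.starProjection_apply_mem x))
  · rw [add_comm, sub_add_eq_sub_sub]
    exact sub_mem (sub_starProjection_mem_orthogonal x)
      (isOrtho_iff_le.mp h (U.starProjection_apply_mem x))

end Submodule

variable {E : Type*} [NormedAddCommGroup E] [InnerProductSpace ℂ E] [FiniteDimensional ℂ E]

theorem projL_eq_starProjection (V : Submodule ℂ E) :
    projL V = (V.starProjection : E →ₗ[ℂ] E) :=
  rfl

theorem TV_eq_one_add_smul_projL (V : Submodule ℂ E) (z : ℂ) :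
    TV V z = 1 + (z - 1) • projL V := by
  have hsum : projL V + projL Vᗮ = 1 := by
    ext x
    exact V.starProjection_add_starProjection_orthogonal x
  rw [TV, ← hsum, sub_smul, one_smul]
  abel

theorem Submodule.IsOrtho.TV_sup {U V : Submodule ℂ E} (h : U ⟂ V) (z : ℂ) :
    TV (U ⊔ V) z = TV U z ∘ₗ TV V z := by
  have hUV : projL U * projL V = 0 :=
    congrArg ContinuousLinearMap.toLinearMap h.starProjection_comp_starProjection
  rw [← Module.End.mul_eq_comp, TV_eq_one_add_smul_projL, TV_eq_one_add_smul_projL,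
    TV_eq_one_add_smul_projL, projL_eq_starProjection, h.starProjection_sup,
    ContinuousLinearMap.toLinearMap_add, ← projL_eq_starProjection, ← projL_eq_starProjection]
  simp only [add_mul, mul_add, one_mul, mul_one, smul_add, smul_mul_smul_comm, hUV, smul_zero]
  abel

theorem TV_lemma32 (V₁ V₂ : Submodule ℂ E) (z : ℂ) :
    TV V₂ z ∘ₗ TV V₁ z = TV (V₂ ⊓ (V₂ ⊓ V₁ᗮ)ᗮ) z ∘ₗ TV ((V₂ ⊓ V₁ᗮ) ⊔ V₁) z := by
  set W := V₂ ⊓ V₁ᗮ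
  have hV₂ : (V₂ ⊓ Wᗮ) ⊔ W = V₂ := by
    rw [sup_comm, inf_comm]
    exact Submodule.sup_orthogonal_inf_of_hasOrthogonalProjection inf_le_left
  have hW₂ : V₂ ⊓ Wᗮ ⟂ W := Submodule.isOrtho_iff_le.mpr inf_le_right
  have hW₁ : W ⟂ V₁ := Submodule.isOrtho_iff_le.mpr inf_le_right
  calc TV V₂ z ∘ₗ TV V₁ z = (TV (V₂ ⊓ Wᗮ) z ∘ₗ TV W z) ∘ₗ TV V₁ z := by
        rw [← hW₂.TV_sup, hV₂]
    _ = TV (V₂ ⊓ Wᗮ) z ∘ₗ TV (W ⊔ V₁) z := by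
        rw [hW₁.TV_sup, LinearMap.comp_assoc]
end

section
/- Let V₁, …, V_l and V'₁, …, V'_{l'} be subspaces of a finite-dimensional complex inner product space E, each sequence satisfying the non-intersection condition (V_{j+1} ∩ V_j⊥ = {0} and V'_{j+1} ∩ V'_j⊥ = {0} for all applicable j), with all subspaces nonzero and proper. If T_{V_l}(z) ∘ ⋯ ∘ T_{V_1}(z) = T_{V'_{l'}}(z) ∘ ⋯ ∘ T_{V'_1}(z) for all z ∈ ℂ, then l = l' and V_j = V'_j for all j (uniqueness of the internal-structure factorization). -/
variable {E : Type*} [NormedAddCommGroup E] [InnerProductSpace ℂ E] [FiniteDimensional ℂ E]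

section projL

variable (U : Submodule ℂ E) (x : E)

lemma projL_mem : projL U x ∈ U :=
  (U.orthogonalProjectionOnto x).2

lemma projL_projL : projL U (projL U x) = projL U x :=
  Submodule.starProjection_eq_self_iff.2 (projL_mem U x)

lemma projL_orthogonal_projL : projL Uᗮ (projL U x) = 0 :=
  (Submodule.starProjection_apply_eq_zero_iff _).2
    (Submodule.le_orthogonal_orthogonal U (projL_mem U x))

lemma projL_projL_orthogonal : projL U (projL Uᗮ x) = 0 :=
  (Submodule.starProjection_apply_eq_zero_iff _).2 (projL_mem Uᗮ x)

lemma projL_add_projL_orthogonal : projL U x + projL Uᗮ x = x :=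
  U.starProjection_add_starProjection_orthogonal x

lemma ker_projL : LinearMap.ker (projL U) = Uᗮ := by
  ext x
  exact Submodule.starProjection_apply_eq_zero_iff U

end projL

section TV

variable (U : Submodule ℂ E)

lemma TV_apply (z : ℂ) (x : E) : TV U z x = z • projL U x + projL Uᗮ x := rfl

lemma TV_zero : TV U 0 = projL Uᗮ := by
  simp [TV]

lemma ker_TV_zero : LinearMap.ker (TV U 0) = U := by
  rw [TV_zero, ker_projL, Submodule.orthogonal_orthogonal]

lemma TV_mul (z w : ℂ) : (TV U z : Module.End ℂ E) * TV U w = TV U (z * w) := by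
  ext x
  simp only [Module.End.mul_apply, TV_apply, map_add, map_smul, projL_projL,
    projL_orthogonal_projL, projL_projL_orthogonal, smul_zero, add_zero, zero_add, smul_smul,
    mul_comm]

lemma TV_one : (TV U 1 : Module.End ℂ E) = 1 := by
  ext x
  simp [TV_apply, projL_add_projL_orthogonal]

lemma isUnit_TV {z : ℂ} (hz : z ≠ 0) : IsUnit (TV U z : Module.End ℂ E) :=
  ⟨⟨TV U z, TV U z⁻¹, by rw [TV_mul, mul_inv_cancel₀ hz, TV_one],
    by rw [TV_mul, inv_mul_cancel₀ hz, TV_one]⟩, rfl⟩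

lemma continuous_TV_apply {g : ℂ → E} (hg : Continuous g) :
    Continuous fun z => TV U z (g z) :=
  (continuous_id.smul ((projL U).continuous_of_finiteDimensional.comp hg)).add
    ((projL Uᗮ).continuous_of_finiteDimensional.comp hg)

lemma ker_mul_TV_zero {A : Module.End ℂ E} (h : LinearMap.ker A ⊓ Uᗮ = ⊥) :
    LinearMap.ker (A * TV U 0) = U := by
  ext x
  have hmem : TV U 0 x ∈ Uᗮ := by
    rw [TV_zero]
    exact projL_mem Uᗮ x
  calc x ∈ LinearMap.ker (A * TV U 0) ↔ TV U 0 x ∈ LinearMap.ker A ⊓ Uᗮ := by simp [hmem]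
    _ ↔ TV U 0 x = 0 := by rw [h, Submodule.mem_bot]
    _ ↔ x ∈ U := by rw [← LinearMap.mem_ker, ker_TV_zero]

end TV

def NonIntersecting {𝕜 F : Type*} [RCLike 𝕜] [NormedAddCommGroup F] [InnerProductSpace 𝕜 F]
    (L : List (Submodule 𝕜 F)) : Prop :=
  L.IsChain fun A B : Submodule 𝕜 F => B ⊓ Aᗮ = ⊥

lemma nonIntersecting_ofFn {𝕜 F : Type*} [RCLike 𝕜] [NormedAddCommGroup F]
    [InnerProductSpace 𝕜 F] {n : ℕ} {V : Fin (n + 1) → Submodule 𝕜 F}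
    (h : ∀ j : Fin n, V j.succ ⊓ (V j.castSucc)ᗮ = ⊥) : NonIntersecting (List.ofFn V) :=
  List.isChain_ofFn.2 fun i hi => h ⟨i, by omega⟩

-- The factors are multiplied in reverse order, so that the head of the list acts first.
noncomputable def tvProd (L : List (Submodule ℂ E)) (z : ℂ) : Module.End ℂ E :=
  (L.map fun U => (TV U z : Module.End ℂ E)).reverse.prod

@[simp]
lemma tvProd_nil (z : ℂ) : tvProd ([] : List (Submodule ℂ E)) z = 1 := rfl

lemma tvProd_cons (U : Submodule ℂ E) (T : List (Submodule ℂ E)) (z : ℂ) :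
    tvProd (U :: T) z = tvProd T z * TV U z := by
  simp [tvProd]

lemma ker_tvProd_zero_cons {U : Submodule ℂ E} {T : List (Submodule ℂ E)}
    (h : NonIntersecting (U :: T)) : LinearMap.ker (tvProd (U :: T) 0) = U := by
  induction T generalizing U with
  | nil => rw [tvProd_cons, tvProd_nil, one_mul, ker_TV_zero]
  | cons W R ih =>
    obtain ⟨hWU, hWR⟩ := List.isChain_cons_cons.1 h
    rw [tvProd_cons]
    exact ker_mul_TV_zero U (by rwa [ih hWR])

lemma continuous_tvProd_apply (L : List (Submodule ℂ E)) {g : ℂ → E} (hg : Continuous g) :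
    Continuous fun z => tvProd L z (g z) := by
  induction L generalizing g with
  | nil => simpa using hg
  | cons U T ih =>
    simpa only [tvProd_cons, Module.End.mul_apply] using ih (continuous_TV_apply U hg)

lemma tvProd_eq_of_forall_ne_zero {L L' : List (Submodule ℂ E)}
    (h : ∀ z ≠ 0, tvProd L z = tvProd L' z) (z : ℂ) : tvProd L z = tvProd L' z := by
  ext x
  have hext : (fun w => tvProd L w x) = fun w => tvProd L' w x :=
    Continuous.ext_on (dense_compl_singleton 0) (continuous_tvProd_apply L continuous_const)
      (continuous_tvProd_apply L' continuous_const) fun w hw => by rw [h w hw]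
  exact congrFun hext z

lemma tvProd_tail_eq {U : Submodule ℂ E} {T T' : List (Submodule ℂ E)}
    (h : ∀ z, tvProd (U :: T) z = tvProd (U :: T') z) (z : ℂ) : tvProd T z = tvProd T' z := by
  refine tvProd_eq_of_forall_ne_zero (fun w hw => ?_) z
  have hw' := h w
  rw [tvProd_cons, tvProd_cons] at hw'
  exact (isUnit_TV U hw).mul_right_cancel hw'

lemma eq_of_forall_tvProd_eq {L L' : List (Submodule ℂ E)}
    (hL : NonIntersecting L) (hL' : NonIntersecting L')
    (hne : ∀ U ∈ L, U ≠ ⊥) (hne' : ∀ U ∈ L', U ≠ ⊥)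
    (h : ∀ z, tvProd L z = tvProd L' z) : L = L' := by
  induction L generalizing L' with
  | nil =>
    cases L' with
    | nil => rfl
    | cons U' T' =>
      refine absurd ?_ (hne' U' List.mem_cons_self)
      rw [← ker_tvProd_zero_cons hL', ← h 0, tvProd_nil, Module.End.one_eq_id, LinearMap.ker_id]
  | cons U T ih =>
    cases L' with
    | nil =>
      refine absurd ?_ (hne U List.mem_cons_self)
      rw [← ker_tvProd_zero_cons hL, h 0, tvProd_nil, Module.End.one_eq_id, LinearMap.ker_id]
    | cons U' T' =>
      obtain rfl : U = U' := by
        rw [← ker_tvProd_zero_cons hL, ← ker_tvProd_zero_cons hL', h 0]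
      rw [ih (L' := T') hL.tail hL'.tail (fun W hW => hne W (List.mem_cons_of_mem U hW))
        (fun W hW => hne' W (List.mem_cons_of_mem U hW)) (tvProd_tail_eq h)]

theorem factorization_unique (l l' : ℕ)
    (V : Fin (l + 1) → Submodule ℂ E) (V' : Fin (l' + 1) → Submodule ℂ E)
    (hVnz : ∀ j, V j ≠ ⊥)
    (hV'nz : ∀ j, V' j ≠ ⊥)
    (hV : ∀ j : Fin l, V j.succ ⊓ (V j.castSucc)ᗮ = ⊥)
    (hV' : ∀ j : Fin l', V' j.succ ⊓ (V' j.castSucc)ᗮ = ⊥)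
    (heq : ∀ z : ℂ,
      (List.ofFn fun j : Fin (l + 1) => (TV (V j) z : Module.End ℂ E)).reverse.prod =
      (List.ofFn fun j : Fin (l' + 1) => (TV (V' j) z : Module.End ℂ E)).reverse.prod) :
    ∃ h : l = l', ∀ j : Fin (l + 1), V j = V' (Fin.cast (by rw [h]) j) := by
  have hlist : List.ofFn V = List.ofFn V' :=
    eq_of_forall_tvProd_eq (nonIntersecting_ofFn hV) (nonIntersecting_ofFn hV')
      (List.forall_mem_ofFn_iff.2 hVnz) (List.forall_mem_ofFn_iff.2 hV'nz)
      fun z => by simpa only [tvProd, List.map_ofFn, Function.comp_def] using heq z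
  obtain ⟨hlen, hVV'⟩ := Fin.sigma_eq_iff_eq_comp_cast.1 (List.ofFn_inj'.1 hlist)
  exact ⟨Nat.succ_injective hlen, congrFun hVV'⟩
end
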